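/- arXiv:math/0604395 — 2 statements merged into one kernel-verified Lean document; each statement's English description precedes it below -/
import Mathlib

section
/- Let Z be a Parisian walk and write ΔZ_i := Z_i − Z_{i−1} for i ≥ 1. Fix t ∈ ℕ and for each t-tuple S = (s_1, …, s_t) ∈ {1, ζ, ζ²}^t define ΔZ_S := ∏_{i : s_i = ζ} ΔZ_i · ∏_{i : s_i = ζ²} conj(ΔZ_i). Then for all S, S′ ∈ {1, ζ, ζ²}^t one has E[ΔZ_S · conj(ΔZ_{S′})] = 1 if S = S′ and E[ΔZ_S · conj(ΔZ_{S′})] = 0 if S ≠ S′. -/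
/-!
For a step `w ∈ {1, ζ, ζ²}` one has `conj w = w²`, so the factors of `ΔZ_S · conj ΔZ_{S'}`
collapse: almost surely it equals `ΔZ_U` with `Uᵢ = Sᵢ · conj S'ᵢ`, and `U = (1, …, 1)` iff
`S = S'`. If `U` has an entry `≠ 1`, take the last one, at index `j`: its factor is `ΔZ_{j+1}`
or its conjugate, which has conditional expectation `0` given `ℱ_j` by the martingale property,
while the earlier factors are `ℱ_j`-measurable of modulus `1`; pulling them out gives
`E[ΔZ_U] = 0`.
-/

open MeasureTheory Complex
open scoped Classical

noncomputable section

namespace Parisian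

/-- The primitive cube root of unity `ζ = (−1 + √3·i)/2`. -/
def zeta : ℂ := (-1 + Real.sqrt 3 * Complex.I) / 2

/-- The lattice `ℤ[ζ] = {a + bζ : a, b ∈ ℤ}` as a subset of `ℂ`. -/
def Zlat : Set ℂ := {z | ∃ a b : ℤ, z = (a : ℂ) + (b : ℂ) * zeta}

/-- The set of admissible steps `{1, ζ, ζ²}`. -/
def steps : Set ℂ := {1, zeta, zeta ^ 2}

/-- The set `P = {0, 1, 1 + ζ}`. -/
def Pset : Set ℂ := {0, 1, 1 + zeta}

/-- Graph distance from the set `P` in `ℤ[ζ]`: the least `n` such that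
`z = p + w₁ + ⋯ + w_n` with `p ∈ P` and each `wᵢ ∈ {1, ζ, ζ²}`. -/
def gdist (z : ℂ) : ℕ :=
  sInf {n : ℕ | ∃ p ∈ Pset, ∃ w : Fin n → ℂ, (∀ i, w i ∈ steps) ∧ z = p + ∑ i, w i}

def A1 : Set ℂ := {z | ∃ k1 k2 : ℤ, z = (k1 : ℂ) + (k2 : ℂ) * zeta ^ 2 ∧ 1 < k2 + 1 ∧ k2 + 1 < k1}
def A2 : Set ℂ := {z | ∃ k1 k2 : ℤ, z = -(k1 : ℂ) * zeta - (k2 : ℂ) ∧ 0 ≤ k2 ∧ k2 < k1}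
def A3 : Set ℂ := {z | ∃ k1 k2 : ℤ, z = -(k1 : ℂ) - (k2 : ℂ) * zeta ∧ 0 < k2 ∧ k2 < k1}
def A4 : Set ℂ := {z | ∃ k1 k2 : ℤ, z = (k1 : ℂ) * zeta + (k2 : ℂ) * zeta ^ 2 ∧ 0 ≤ k2 ∧ k2 < k1}
def A5 : Set ℂ := {z | ∃ k1 k2 : ℤ, z = -(k1 : ℂ) * zeta ^ 2 - (k2 : ℂ) ∧ 1 < k2 + 1 ∧ k2 + 1 < k1}
def A6 : Set ℂ := {z | ∃ k1 k2 : ℤ, z = (k1 : ℂ) + (k2 : ℂ) * zeta ∧ 0 < k2 ∧ k2 < k1}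

def B1 : Set ℂ := {z | ∃ n : ℤ, z = (n : ℂ) ∧ 2 ≤ n}
def B2 : Set ℂ := {z | ∃ n : ℤ, z = (n : ℂ) * zeta - zeta ^ 2 ∧ 1 ≤ n}
def B3 : Set ℂ := {z | ∃ n : ℤ, z = (n : ℂ) * zeta ^ 2 ∧ 1 ≤ n}
def B4 : Set ℂ := {z | ∃ n : ℤ, z = (n : ℂ) ∧ n ≤ -1}
def B5 : Set ℂ := {z | ∃ n : ℤ, z = 1 + (n : ℂ) * zeta ∧ n ≤ -1}
def B6 : Set ℂ := {z | ∃ n : ℤ, z = (n : ℂ) * zeta ^ 2 ∧ n ≤ -2}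

/-- The closure `Ā₁ = A₁ ∪ B₁ ∪ B₅ ∪ {1}`. -/
def Abar1 : Set ℂ := A1 ∪ B1 ∪ B5 ∪ {1}
/-- The closure `Ā₃ = A₃ ∪ B₃ ∪ B₄ ∪ {0}`. -/
def Abar3 : Set ℂ := A3 ∪ B3 ∪ B4 ∪ {0}
/-- The closure `Ā₅ = A₅ ∪ B₂ ∪ B₆ ∪ {1+ζ}`. -/
def Abar5 : Set ℂ := A5 ∪ B2 ∪ B6 ∪ {1 + zeta}

/-- `φ(z) = 1_{Ā₁}(z) + ζ·1_{Ā₃}(z) + ζ²·1_{Ā₅}(z)`. -/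
def phi (z : ℂ) : ℂ :=
  Abar1.indicator 1 z + zeta * Abar3.indicator 1 z + zeta ^ 2 * Abar5.indicator 1 z

/-- `ψ(z) = 1_{A₆}(z) + ζ·1_{A₄}(z) + ζ²·1_{A₂}(z)`. -/
def psi (z : ℂ) : ℂ :=
  A6.indicator 1 z + zeta * A4.indicator 1 z + zeta ^ 2 * A2.indicator 1 z

variable {Ω : Type*} {mΩ : MeasurableSpace Ω}

/-- A Parisian walk: an adapted integrable martingale starting in `ℤ[ζ]` a.s.,
with increments in `{1, ζ, ζ²}` a.s. -/
def IsParisian (μ : Measure Ω) (ℱ : Filtration ℕ mΩ) (Z : ℕ → Ω → ℂ) : Prop :=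
  Martingale Z ℱ μ ∧ (∀ᵐ ω ∂μ, Z 0 ω ∈ Zlat) ∧
    ∀ t : ℕ, ∀ᵐ ω ∂μ, Z (t + 1) ω - Z t ω ∈ steps

/-- The local time of a walk: the number of exits from `Ā₁`, `Ā₃`, `Ā₅` before time `t`. -/
def localTime (Z : ℕ → Ω → ℂ) (t : ℕ) (ω : Ω) : ℕ :=
  ∑ u ∈ Finset.range t,
    ((if Z u ω ∈ Abar1 ∧ Z (u + 1) ω ∉ Abar1 then 1 else 0) +
     (if Z u ω ∈ Abar3 ∧ Z (u + 1) ω ∉ Abar3 then 1 else 0) +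
     (if Z u ω ∈ Abar5 ∧ Z (u + 1) ω ∉ Abar5 then 1 else 0))

/-- `ΔZ_S = ∏_{i : sᵢ = ζ} ΔZᵢ · ∏_{i : sᵢ = ζ²} conj(ΔZᵢ)` where `ΔZᵢ = Zᵢ − Z_{i−1}`,
for a tuple `S : Fin t → ℂ` (with entries in `{1, ζ, ζ²}`). -/
def deltaZS (Z : ℕ → Ω → ℂ) (t : ℕ) (S : Fin t → ℂ) (ω : Ω) : ℂ :=
  ∏ i : Fin t,
    (if S i = zeta then Z ((i : ℕ) + 1) ω - Z (i : ℕ) ω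
     else if S i = zeta ^ 2 then starRingEnd ℂ (Z ((i : ℕ) + 1) ω - Z (i : ℕ) ω)
     else 1)

end Parisian

namespace Parisian

lemma zeta_re : zeta.re = -1 / 2 := by simp [zeta]

lemma zeta_im : zeta.im = √3 / 2 := by simp [zeta]

lemma zeta_sq : zeta ^ 2 = -1 - zeta := by
  have h3 : √3 * √3 = 3 := Real.mul_self_sqrt (by norm_num)
  simp only [Complex.ext_iff, sq, mul_re, mul_im, zeta_re, zeta_im, sub_re, sub_im, neg_re,
    neg_im, one_re, one_im]
  constructor <;> nlinarith [h3]

lemma conj_zeta : starRingEnd ℂ zeta = zeta ^ 2 := by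
  rw [zeta_sq, Complex.ext_iff]
  norm_num [zeta_re, zeta_im]

lemma zeta_pow_three : zeta ^ 3 = 1 := by
  rw [pow_succ, zeta_sq]
  linear_combination (-1 : ℂ) * zeta_sq

lemma zeta_pow_four : zeta ^ 4 = zeta := by
  rw [pow_succ', zeta_pow_three, mul_one]

lemma conj_zeta_sq : starRingEnd ℂ (zeta ^ 2) = zeta := by
  rw [← conj_zeta, Complex.conj_conj]

lemma zeta_ne_one : zeta ≠ 1 := by
  intro h
  have := congrArg Complex.im h
  simp [zeta_im] at this

lemma zeta_sq_ne_one : zeta ^ 2 ≠ 1 := by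
  intro h
  have := congrArg Complex.im h
  rw [← conj_zeta] at this
  simp [zeta_im] at this

lemma zeta_ne_zeta_sq : zeta ≠ zeta ^ 2 := by
  intro h
  have := congrArg Complex.im h
  rw [← conj_zeta, Complex.conj_im, zeta_im] at this
  linarith [Real.sqrt_pos.mpr (show (0 : ℝ) < 3 by norm_num)]

lemma pow_three_of_mem_steps {w : ℂ} (hw : w ∈ steps) : w ^ 3 = 1 := by
  rcases hw with rfl | rfl | rfl
  · exact one_pow 3
  · exact zeta_pow_three
  · rw [← pow_mul, pow_mul', zeta_pow_three, one_pow]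

lemma conj_of_mem_steps {w : ℂ} (hw : w ∈ steps) : starRingEnd ℂ w = w ^ 2 := by
  rcases hw with rfl | rfl | rfl
  · simp
  · exact conj_zeta
  · rw [conj_zeta_sq, ← pow_mul, zeta_pow_four]

lemma norm_of_mem_steps {w : ℂ} (hw : w ∈ steps) : ‖w‖ = 1 :=
  Complex.norm_eq_one_of_pow_eq_one (pow_three_of_mem_steps hw) three_ne_zero

lemma mul_conj_of_mem_steps {w : ℂ} (hw : w ∈ steps) : w * starRingEnd ℂ w = 1 := by
  rw [conj_of_mem_steps hw, ← pow_succ', pow_three_of_mem_steps hw]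

lemma mul_conj_mem_steps {s s' : ℂ} (hs : s ∈ steps) (hs' : s' ∈ steps) :
    s * starRingEnd ℂ s' ∈ steps := by
  rcases hs with rfl | rfl | rfl <;> rcases hs' with rfl | rfl | rfl <;>
    simp [steps, conj_zeta, conj_zeta_sq, ← pow_succ, ← pow_succ', ← pow_two, ← pow_mul,
      zeta_pow_three, zeta_pow_four]

lemma mul_conj_eq_one_iff {s s' : ℂ} (hs' : s' ∈ steps) : s * starRingEnd ℂ s' = 1 ↔ s = s' := by
  refine ⟨fun h => ?_, fun h => by rw [h, mul_conj_of_mem_steps hs']⟩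
  calc s = s * starRingEnd ℂ s' * s' := by
        rw [mul_assoc, mul_comm (starRingEnd ℂ s'), mul_conj_of_mem_steps hs', mul_one]
    _ = s' := by rw [h, one_mul]

def twist (s w : ℂ) : ℂ :=
  if s = zeta then w else if s = zeta ^ 2 then starRingEnd ℂ w else 1

@[simp] lemma twist_one (w : ℂ) : twist 1 w = 1 := by
  simp [twist, zeta_ne_one.symm, zeta_sq_ne_one.symm]

@[simp] lemma twist_zeta (w : ℂ) : twist zeta w = w := if_pos rfl

@[simp] lemma twist_zeta_sq (w : ℂ) : twist (zeta ^ 2) w = starRingEnd ℂ w := by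
  simp [twist, zeta_ne_zeta_sq.symm]

lemma norm_twist (s : ℂ) {w : ℂ} (hw : w ∈ steps) : ‖twist s w‖ = 1 := by
  unfold twist
  split_ifs <;> simp [norm_of_mem_steps hw]

lemma twist_mul_conj_twist {s s' w : ℂ} (hs : s ∈ steps) (hs' : s' ∈ steps) (hw : w ∈ steps) :
    twist s w * starRingEnd ℂ (twist s' w) = twist (s * starRingEnd ℂ s') w := by
  have hw2 : w ^ 2 = starRingEnd ℂ w := (conj_of_mem_steps hw).symm
  have hcw2 : starRingEnd ℂ w ^ 2 = w := by rw [← map_pow, hw2, Complex.conj_conj]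
  have hwc := mul_conj_of_mem_steps hw
  rcases hs with rfl | rfl | rfl <;> rcases hs' with rfl | rfl | rfl <;>
    simp [conj_zeta, conj_zeta_sq, ← pow_succ, ← pow_succ', ← pow_two, ← pow_mul,
      zeta_pow_three, zeta_pow_four, hw2, hcw2, hwc, mul_comm _ w]

section Walk

variable {Ω : Type*} {mΩ : MeasurableSpace Ω} {μ : Measure Ω} {ℱ : Filtration ℕ mΩ}
  {Z : ℕ → Ω → ℂ}

lemma stronglyMeasurable_twist {m : MeasurableSpace Ω} (s : ℂ) {f : Ω → ℂ}
    (hf : StronglyMeasurable[m] f) : StronglyMeasurable[m] fun ω => twist s (f ω) := by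
  unfold twist
  split_ifs
  · exact hf
  · exact Complex.continuous_conj.comp_stronglyMeasurable hf
  · exact stronglyMeasurable_const

lemma integrable_twist [IsFiniteMeasure μ] (s : ℂ) {f : Ω → ℂ} (hf : Integrable f μ) :
    Integrable (fun ω => twist s (f ω)) μ := by
  unfold twist
  split_ifs
  · exact hf
  · exact Complex.conjCLE.toContinuousLinearMap.integrable_comp hf
  · exact integrable_const 1

lemma deltaZS_eq_prod (t : ℕ) (S : Fin t → ℂ) (ω : Ω) :
    deltaZS Z t S ω = ∏ i : Fin t, twist (S i) (Z (i + 1) ω - Z i ω) := rfl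

lemma deltaZS_succ (t : ℕ) (S : Fin (t + 1) → ℂ) (ω : Ω) :
    deltaZS Z (t + 1) S ω
      = deltaZS Z t (Fin.init S) ω * twist (S (Fin.last t)) (Z (t + 1) ω - Z t ω) :=
  Fin.prod_univ_castSucc _

lemma norm_deltaZS {ω : Ω} (hΔ : ∀ i, Z (i + 1) ω - Z i ω ∈ steps) (t : ℕ) (S : Fin t → ℂ) :
    ‖deltaZS Z t S ω‖ = 1 := by
  simp [deltaZS_eq_prod, norm_twist _ (hΔ _)]

lemma deltaZS_mul_conj {ω : Ω} (hΔ : ∀ i, Z (i + 1) ω - Z i ω ∈ steps) {t : ℕ}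
    {S S' : Fin t → ℂ} (hS : ∀ i, S i ∈ steps) (hS' : ∀ i, S' i ∈ steps) :
    deltaZS Z t S ω * starRingEnd ℂ (deltaZS Z t S' ω)
      = deltaZS Z t (fun i => S i * starRingEnd ℂ (S' i)) ω := by
  simp only [deltaZS_eq_prod, map_prod, ← Finset.prod_mul_distrib]
  exact Finset.prod_congr rfl fun i _ => twist_mul_conj_twist (hS i) (hS' i) (hΔ i)

lemma stronglyMeasurable_deltaZS (hZ : StronglyAdapted ℱ Z) (t : ℕ) (S : Fin t → ℂ) :
    StronglyMeasurable[ℱ t] (deltaZS Z t S) := by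
  have hmono {j : ℕ} (hj : j ≤ t) : StronglyMeasurable[ℱ t] (Z j) := (hZ j).mono (ℱ.mono hj)
  simp only [funext (deltaZS_eq_prod (Z := Z) t S)]
  exact Finset.stronglyMeasurable_fun_prod _ fun i _ =>
    stronglyMeasurable_twist _ ((hmono i.isLt).sub (hmono i.isLt.le))

lemma integrable_deltaZS [IsFiniteMeasure μ] (hZ : StronglyAdapted ℱ Z)
    (hΔ : ∀ᵐ ω ∂μ, ∀ i, Z (i + 1) ω - Z i ω ∈ steps) (t : ℕ) (S : Fin t → ℂ) :
    Integrable (deltaZS Z t S) μ :=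
  Integrable.of_bound ((stronglyMeasurable_deltaZS hZ t S).mono (ℱ.le t)).aestronglyMeasurable 1
    (hΔ.mono fun _ h => (norm_deltaZS h t S).le)

lemma integral_mul_eq_zero_of_condExp_eq_zero [IsFiniteMeasure μ] {m : MeasurableSpace Ω}
    (hm : m ≤ mΩ) {Y X : Ω → ℂ} (hY : StronglyMeasurable[m] Y)
    (hYX : Integrable (fun ω => Y ω * X ω) μ) (hX : Integrable X μ) (hX0 : μ[X | m] =ᵐ[μ] 0) :
    ∫ ω, Y ω * X ω ∂μ = 0 := by
  have hpull : μ[fun ω => Y ω * X ω | m] =ᵐ[μ] fun ω => Y ω * μ[X | m] ω :=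
    condExp_bilin_of_stronglyMeasurable_left (ContinuousLinearMap.mul ℝ ℂ) hY hYX hX
  have hzero : μ[fun ω => Y ω * X ω | m] =ᵐ[μ] 0 :=
    hpull.trans (hX0.mono fun ω h => by simp [h])
  rw [← integral_condExp hm, integral_congr_ae hzero, Pi.zero_def, integral_zero]

lemma condExp_twist_increment_eq_zero [IsFiniteMeasure μ] (hZ : Martingale Z ℱ μ) {s : ℂ}
    (hs : s ∈ steps) (hs1 : s ≠ 1) (i : ℕ) :
    μ[fun ω => twist s (Z (i + 1) ω - Z i ω) | ℱ i] =ᵐ[μ] 0 := by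
  have hΔ_int : Integrable (fun ω => Z (i + 1) ω - Z i ω) μ :=
    (hZ.integrable _).sub (hZ.integrable _)
  have hΔ : μ[fun ω => Z (i + 1) ω - Z i ω | ℱ i] =ᵐ[μ] 0 := by
    filter_upwards [condExp_sub (hZ.integrable (i + 1)) (hZ.integrable i) (ℱ i),
      hZ.condExp_ae_eq i.le_succ, hZ.condExp_ae_eq (le_refl i)] with ω h h1 h0
    exact h.trans (by rw [Pi.sub_apply, h1, h0, Pi.zero_apply, sub_self])
  rcases hs with rfl | rfl | rfl
  · exact absurd rfl hs1
  · simpa using hΔ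
  · have hconj := Complex.conjCLE.toContinuousLinearMap.comp_condExp_comm hΔ_int (m := ℱ i)
    simp only [twist_zeta_sq]
    refine hconj.symm.trans ?_
    filter_upwards [hΔ] with ω h
    simp [h]

lemma integral_deltaZS [IsProbabilityMeasure μ] (hZ : Martingale Z ℱ μ)
    (hΔ : ∀ᵐ ω ∂μ, ∀ i, Z (i + 1) ω - Z i ω ∈ steps) {t : ℕ} {U : Fin t → ℂ}
    (hU : ∀ i, U i ∈ steps) :
    ∫ ω, deltaZS Z t U ω ∂μ = if ∀ i, U i = 1 then 1 else 0 := by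
  induction t with
  | zero => simp [deltaZS_eq_prod]
  | succ t ih =>
    by_cases hlast : U (Fin.last t) = 1
    · have hinit : deltaZS Z (t + 1) U = deltaZS Z t (Fin.init U) :=
        funext fun ω => by rw [deltaZS_succ, hlast, twist_one, mul_one]
      rw [hinit, ih (U := Fin.init U) fun i => hU _]
      exact if_congr (by simp [Fin.forall_fin_succ', Fin.init, hlast]) rfl rfl
    · have hsucc := funext (deltaZS_succ (Z := Z) t U)
      have hint := integrable_deltaZS hZ.stronglyAdapted hΔ (t + 1) U
      rw [hsucc] at hint
      rw [if_neg fun h => hlast (h _), hsucc]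
      exact integral_mul_eq_zero_of_condExp_eq_zero (ℱ.le t)
        (stronglyMeasurable_deltaZS hZ.stronglyAdapted t _) hint
        (integrable_twist _ ((hZ.integrable _).sub (hZ.integrable _)))
        (condExp_twist_increment_eq_zero hZ (hU _) hlast t)

end Walk

/-- Orthonormality of the family `{ΔZ_S : S ∈ {1, ζ, ζ²}^t}`:
`E[ΔZ_S · conj(ΔZ_{S'})] = 1` if `S = S'` and `= 0` otherwise. -/
theorem deltaZS_orthonormal
    {Ω : Type*} {mΩ : MeasurableSpace Ω} (μ : Measure Ω) [IsProbabilityMeasure μ]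
    (ℱ : Filtration ℕ mΩ) (Z : ℕ → Ω → ℂ) (hZ : IsParisian μ ℱ Z)
    (t : ℕ) (S S' : Fin t → ℂ) (hS : ∀ i, S i ∈ steps) (hS' : ∀ i, S' i ∈ steps) :
    ∫ ω, deltaZS Z t S ω * starRingEnd ℂ (deltaZS Z t S' ω) ∂μ
      = if S = S' then 1 else 0 := by
  obtain ⟨hmart, -, hsteps⟩ := hZ
  have hΔ : ∀ᵐ ω ∂μ, ∀ i, Z (i + 1) ω - Z i ω ∈ steps := ae_all_iff.mpr hsteps
  rw [integral_congr_ae (hΔ.mono fun ω h => deltaZS_mul_conj h hS hS'),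
    integral_deltaZS hmart hΔ fun i => mul_conj_mem_steps (hS i) (hS' i)]
  simp only [mul_conj_eq_one_iff (hS' _), funext_iff]

end Parisian
end
end

section
/- Let Z be a Parisian walk and set φ_t := φ(Z_t), ψ_t := ψ(Z_t). Define Z′_t := Σ_{s=0}^{t−1} [ φ_s·(Z_{s+1} − Z_s) + ψ_s·(conj(Z_{s+1}) − conj(Z_s)) ] (with Z′_0 = 0). Then Z′ is a Parisian walk: it is an adapted, integrable martingale with Z′_0 ∈ ℤ[ζ] and Z′_{t+1} − Z′_t ∈ {1, ζ, ζ²} almost surely for every t. -/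
open MeasureTheory Complex
open scoped Classical

noncomputable section

namespace Parisian

/-- The transformed walk `Z′_t = Σ_{s<t} (φ(Z_s)·ΔZ_s + ψ(Z_s)·Δ(conj Z)_s)`. -/
def transformedWalk {Ω : Type*} (Z : ℕ → Ω → ℂ) (t : ℕ) (ω : Ω) : ℂ :=
  ∑ s ∈ Finset.range t,
    (phi (Z s ω) * (Z (s + 1) ω - Z s ω) +
     psi (Z s ω) * (starRingEnd ℂ (Z (s + 1) ω) - starRingEnd ℂ (Z s ω)))

end Parisian

/-!
On `ℤ[ζ] = {a + bζ}` the sets `Ā₁, Ā₃, Ā₅, A₂, A₄, A₆` are six sectors in the coordinates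
`(a, b)` that partition the lattice, and on each of them exactly one of `φ`, `ψ` is non-zero and
equals a cube root of unity `u`. Hence every increment of `Z′` is `u·w` or `u·conj w` for a step
`w`, again a cube root of unity. `Z′` is the sum of the martingale transforms of `Z` and of
`conj Z` by the bounded adapted integrands `φ(Z_t)` and `ψ(Z_t)`, hence a martingale.
-/

namespace MeasureTheory

variable {Ω E F 𝕜 : Type*} {mΩ : MeasurableSpace Ω} {μ : Measure Ω} {ℱ : Filtration ℕ mΩ}
  [NormedAddCommGroup E] [NormedSpace ℝ E] [CompleteSpace E]

theorem Martingale.comp_continuousLinearMap [NormedAddCommGroup F] [NormedSpace ℝ F]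
    [CompleteSpace F] {f : ℕ → Ω → E} (hf : Martingale f ℱ μ) (T : E →L[ℝ] F) :
    Martingale (fun n => T ∘ f n) ℱ μ := by
  refine ⟨fun n => T.continuous.comp_stronglyMeasurable (hf.stronglyAdapted n), fun i j hij => ?_⟩
  filter_upwards [T.comp_condExp_comm (hf.integrable j) (m := ℱ i), hf.condExp_ae_eq hij]
    with ω hω hfω
  rw [← hω, Function.comp_apply, hfω, Function.comp_apply]

theorem Martingale.condExp_sub_ae_eq_zero [SigmaFiniteFiltration μ ℱ] {f : ℕ → Ω → E}
    (hf : Martingale f ℱ μ) {i j : ℕ} (hij : i ≤ j) : μ[f j - f i | ℱ i] =ᵐ[μ] 0 := by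
  filter_upwards [condExp_sub (hf.integrable j) (hf.integrable i) (ℱ i), hf.condExp_ae_eq hij]
    with ω h1 h2
  rw [h1, Pi.sub_apply, h2, condExp_of_stronglyMeasurable (ℱ.le i) (hf.stronglyAdapted i)
    (hf.integrable i), sub_self, Pi.zero_apply]

theorem Martingale.sum_smul_sub [IsFiniteMeasure μ] [NormedRing 𝕜] [NormedAlgebra ℝ 𝕜]
    [Module 𝕜 E] [IsBoundedSMul 𝕜 E] [IsScalarTower ℝ 𝕜 E] {R : ℝ} {f : ℕ → Ω → E}
    {ξ : ℕ → Ω → 𝕜} (hf : Martingale f ℱ μ) (hξ : StronglyAdapted ℱ ξ)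
    (hbdd : ∀ n ω, ‖ξ n ω‖ ≤ R) :
    Martingale (fun n => ∑ k ∈ Finset.range n, ξ k • (f (k + 1) - f k)) ℱ μ := by
  have hΔint : ∀ k, Integrable (f (k + 1) - f k) μ := fun k =>
    (hf.integrable _).sub (hf.integrable _)
  have hint : ∀ k, Integrable (ξ k • (f (k + 1) - f k)) μ := fun k =>
    (hΔint k).bdd_smul R hξ.stronglyMeasurable.aestronglyMeasurable (ae_of_all _ (hbdd k))
  refine martingale_of_condExp_sub_eq_zero_nat (fun n => ?_)
    (fun n => integrable_finsetSum' _ fun k _ => hint k) fun n => ?_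
  · refine Finset.stronglyMeasurable_sum _ fun k hk => ?_
    rw [Finset.mem_range] at hk
    exact (hξ.stronglyMeasurable_le hk.le).smul
      ((hf.stronglyAdapted.stronglyMeasurable_le hk).sub
        (hf.stronglyAdapted.stronglyMeasurable_le hk.le))
  · simp only [Finset.sum_range_succ, add_sub_cancel_left]
    filter_upwards [condExp_bilin_of_aestronglyMeasurable_left (.lsmul ℝ 𝕜)
      (hξ n).aestronglyMeasurable (hint n) (hΔint n), hf.condExp_sub_ae_eq_zero n.le_succ]
      with ω h1 h2
    rw [h2, Pi.zero_apply, map_zero] at h1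
    exact h1

end MeasureTheory

namespace Parisian

lemma norm_zeta : ‖zeta‖ = 1 :=
  norm_eq_one_of_pow_eq_one zeta_pow_three (by norm_num)

lemma mem_steps_iff {w : ℂ} : w ∈ steps ↔ w ^ 3 = 1 := by
  have h : w ^ 3 - 1 = (w - 1) * (w - zeta) * (w - zeta ^ 2) := by
    linear_combination (w ^ 2 - zeta * w + zeta - 1) * zeta_sq
  simp [steps, ← sub_eq_zero (a := w ^ 3), h, sub_eq_zero, or_assoc]

lemma mul_mem_steps {u w : ℂ} (hu : u ∈ steps) (hw : w ∈ steps) : u * w ∈ steps := by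
  rw [mem_steps_iff] at *
  rw [mul_pow, hu, hw, one_mul]

lemma conj_mem_steps {w : ℂ} (hw : w ∈ steps) : starRingEnd ℂ w ∈ steps := by
  rw [mem_steps_iff] at *
  rw [← map_pow, hw, map_one]

section Lattice

def lat (a b : ℤ) : ℂ := a + b * zeta

variable {a b c d : ℤ}

lemma lat_mem_Zlat : lat a b ∈ Zlat := ⟨a, b, rfl⟩

lemma countable_Zlat : Zlat.Countable :=
  (Set.countable_range fun p : ℤ × ℤ => lat p.1 p.2).mono <| by
    rintro _ ⟨a, b, rfl⟩
    exact ⟨(a, b), rfl⟩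

lemma lat_inj : lat a b = lat c d ↔ a = c ∧ b = d := by
  refine ⟨fun h => ?_, fun ⟨hac, hbd⟩ => hac ▸ hbd ▸ rfl⟩
  have hb : b = d := by simpa [lat, zeta] using congrArg im h
  subst hb
  exact ⟨by simpa [lat] using congrArg re h, rfl⟩

lemma intCast_eq_lat (n : ℤ) : (n : ℂ) = lat n 0 := by simp [lat]

lemma one_eq_lat : (1 : ℂ) = lat 1 0 := by simp [lat]

lemma zero_eq_lat : (0 : ℂ) = lat 0 0 := by simp [lat]

lemma zeta_eq_lat : zeta = lat 0 1 := by simp [lat]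

lemma lat_add : lat a b + lat c d = lat (a + c) (b + d) := by
  simp only [lat]; push_cast; ring

lemma lat_neg : -lat a b = lat (-a) (-b) := by
  simp only [lat]; push_cast; ring

lemma lat_sub : lat a b - lat c d = lat (a - c) (b - d) := by
  simp only [lat]; push_cast; ring

lemma lat_mul : lat a b * lat c d = lat (a * c - b * d) (a * d + b * c - b * d) := by
  simp only [lat]; push_cast; linear_combination (b * d : ℂ) * zeta_sq

lemma add_mem_Zlat_of_mem_steps {z w : ℂ} (hz : z ∈ Zlat) (hw : w ∈ steps) : z + w ∈ Zlat := by
  obtain ⟨a, b, rfl⟩ : ∃ a b, z = lat a b := hz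
  rcases hw with rfl | rfl | rfl <;>
    simp only [one_eq_lat, zeta_eq_lat, sq, lat_mul, lat_add] <;>
    exact lat_mem_Zlat

end Lattice

section Sectors

variable {a b : ℤ}

lemma lat_mem_Abar1 : lat a b ∈ Abar1 ↔ 1 ≤ a ∧ b ≤ 0 := by
  simp only [Abar1, A1, B1, B5, Set.mem_union, Set.mem_ofPred_eq, Set.mem_singleton_iff,
    intCast_eq_lat, one_eq_lat, zeta_eq_lat, sq, lat_add, lat_mul, lat_inj]
  constructor
  · rintro (((⟨k1, k2, h⟩ | ⟨n, h⟩) | ⟨n, h⟩) | h) <;> omega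
  · intro h
    by_cases hb : b = 0 <;> by_cases ha : a = 1
    · right; omega
    · left; left; right; exact ⟨a, by omega⟩
    · left; right; exact ⟨b, by omega⟩
    · left; left; left; exact ⟨a - b, -b, by omega⟩

lemma lat_mem_Abar3 : lat a b ∈ Abar3 ↔ a ≤ b ∧ b ≤ 0 := by
  simp only [Abar3, A3, B3, B4, Set.mem_union, Set.mem_ofPred_eq, Set.mem_singleton_iff,
    intCast_eq_lat, zero_eq_lat, zeta_eq_lat, sq, lat_neg, lat_sub, lat_mul, lat_inj]
  constructor
  · rintro (((⟨k1, k2, h⟩ | ⟨n, h⟩) | ⟨n, h⟩) | h) <;> omega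
  · intro h
    by_cases hb : b = 0 <;> by_cases ha : a = b
    · right; omega
    · left; right; exact ⟨a, by omega⟩
    · left; left; right; exact ⟨-a, by omega⟩
    · left; left; left; exact ⟨-a, -b, by omega⟩

lemma lat_mem_Abar5 : lat a b ∈ Abar5 ↔ 1 ≤ a ∧ a ≤ b := by
  simp only [Abar5, A5, B2, B6, Set.mem_union, Set.mem_ofPred_eq, Set.mem_singleton_iff,
    intCast_eq_lat, one_eq_lat, zeta_eq_lat, sq, lat_neg, lat_add, lat_sub, lat_mul, lat_inj]
  constructor
  · rintro (((⟨k1, k2, h⟩ | ⟨n, h⟩) | ⟨n, h⟩) | h) <;> omega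
  · intro h
    by_cases ha : a = 1 <;> by_cases hb : a = b
    · right; omega
    · left; left; right; exact ⟨b - 1, by omega⟩
    · left; right; exact ⟨-a, by omega⟩
    · left; left; left; exact ⟨b, b - a, by omega⟩

lemma lat_mem_A2 : lat a b ∈ A2 ↔ b < a ∧ a ≤ 0 := by
  simp only [A2, Set.mem_ofPred_eq, intCast_eq_lat, zeta_eq_lat, lat_neg, lat_sub, lat_mul,
    lat_inj]
  exact ⟨fun ⟨k1, k2, h⟩ => by omega, fun h => ⟨-b, -a, by omega⟩⟩

lemma lat_mem_A4 : lat a b ∈ A4 ↔ a ≤ 0 ∧ 1 ≤ b := by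
  simp only [A4, Set.mem_ofPred_eq, intCast_eq_lat, zeta_eq_lat, sq, lat_add, lat_mul, lat_inj]
  exact ⟨fun ⟨k1, k2, h⟩ => by omega, fun h => ⟨b - a, -a, by omega⟩⟩

lemma lat_mem_A6 : lat a b ∈ A6 ↔ 1 ≤ b ∧ b < a := by
  simp only [A6, Set.mem_ofPred_eq, intCast_eq_lat, zeta_eq_lat, lat_add, lat_mul, lat_inj]
  exact ⟨fun ⟨k1, k2, h⟩ => by omega, fun h => ⟨a, b, by omega⟩⟩

lemma phi_psi_lat_cases (a b : ℤ) :
    (phi (lat a b) ∈ steps ∧ psi (lat a b) = 0) ∨ (phi (lat a b) = 0 ∧ psi (lat a b) ∈ steps) := by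
  simp only [phi, psi, Set.indicator_apply, lat_mem_Abar1, lat_mem_Abar3, lat_mem_Abar5,
    lat_mem_A2, lat_mem_A4, lat_mem_A6, Pi.one_apply]
  -- the six sectors partition `ℤ²`, so all but six branches are contradictory
  split_ifs <;> first | omega | simp [steps]

lemma phi_mul_add_psi_mul_conj_mem_steps {z w : ℂ} (hz : z ∈ Zlat) (hw : w ∈ steps) :
    phi z * w + psi z * starRingEnd ℂ w ∈ steps := by
  obtain ⟨a, b, rfl⟩ : ∃ a b, z = lat a b := hz
  rcases phi_psi_lat_cases a b with ⟨hφ, hψ⟩ | ⟨hφ, hψ⟩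
  · rw [hψ, zero_mul, add_zero]
    exact mul_mem_steps hφ hw
  · rw [hφ, zero_mul, zero_add]
    exact mul_mem_steps hψ (conj_mem_steps hw)

end Sectors

lemma measurableSet_of_subset_Zlat {s : Set ℂ} (hs : s ⊆ Zlat) : MeasurableSet s :=
  (countable_Zlat.mono hs).measurableSet

lemma measurableSet_Abar1 : MeasurableSet Abar1 := measurableSet_of_subset_Zlat <| by
  rintro _ (((⟨k1, k2, rfl, -⟩ | ⟨n, rfl, -⟩) | ⟨n, rfl, -⟩) | rfl) <;>
    simp only [intCast_eq_lat, one_eq_lat, zeta_eq_lat, sq, lat_add, lat_mul] <;>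
    exact lat_mem_Zlat

lemma measurableSet_Abar3 : MeasurableSet Abar3 := measurableSet_of_subset_Zlat <| by
  rintro _ (((⟨k1, k2, rfl, -⟩ | ⟨n, rfl, -⟩) | ⟨n, rfl, -⟩) | rfl) <;>
    simp only [intCast_eq_lat, zero_eq_lat, zeta_eq_lat, sq, lat_neg, lat_sub, lat_mul] <;>
    exact lat_mem_Zlat

lemma measurableSet_Abar5 : MeasurableSet Abar5 := measurableSet_of_subset_Zlat <| by
  rintro _ (((⟨k1, k2, rfl, -⟩ | ⟨n, rfl, -⟩) | ⟨n, rfl, -⟩) | rfl) <;>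
    simp only [intCast_eq_lat, one_eq_lat, zeta_eq_lat, sq, lat_add, lat_neg, lat_sub, lat_mul] <;>
    exact lat_mem_Zlat

lemma measurableSet_A2 : MeasurableSet A2 := measurableSet_of_subset_Zlat <| by
  rintro _ ⟨k1, k2, rfl, -⟩
  simp only [intCast_eq_lat, zeta_eq_lat, lat_neg, lat_sub, lat_mul]
  exact lat_mem_Zlat

lemma measurableSet_A4 : MeasurableSet A4 := measurableSet_of_subset_Zlat <| by
  rintro _ ⟨k1, k2, rfl, -⟩
  simp only [intCast_eq_lat, zeta_eq_lat, sq, lat_add, lat_mul]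
  exact lat_mem_Zlat

lemma measurableSet_A6 : MeasurableSet A6 := measurableSet_of_subset_Zlat <| by
  rintro _ ⟨k1, k2, rfl, -⟩
  simp only [intCast_eq_lat, zeta_eq_lat, lat_add, lat_mul]
  exact lat_mem_Zlat

lemma measurable_phi : Measurable phi := by
  have h1 := measurableSet_Abar1
  have h3 := measurableSet_Abar3
  have h5 := measurableSet_Abar5
  unfold phi
  fun_prop (disch := assumption)

lemma measurable_psi : Measurable psi := by
  have h2 := measurableSet_A2
  have h4 := measurableSet_A4
  have h6 := measurableSet_A6
  unfold psi
  fun_prop (disch := assumption)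

lemma norm_phi_le (z : ℂ) : ‖phi z‖ ≤ 3 :=
  calc ‖phi z‖ ≤ ‖Abar1.indicator 1 z‖ + ‖zeta * Abar3.indicator 1 z‖
        + ‖zeta ^ 2 * Abar5.indicator 1 z‖ := norm_add₃_le
    _ ≤ 1 + 1 + 1 := by
      simp only [norm_mul, norm_pow, norm_zeta, one_pow, one_mul]
      gcongr <;> exact (norm_indicator_le_norm_self _ _).trans_eq norm_one
    _ = 3 := by norm_num

lemma norm_psi_le (z : ℂ) : ‖psi z‖ ≤ 3 :=
  calc ‖psi z‖ ≤ ‖A6.indicator 1 z‖ + ‖zeta * A4.indicator 1 z‖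
        + ‖zeta ^ 2 * A2.indicator 1 z‖ := norm_add₃_le
    _ ≤ 1 + 1 + 1 := by
      simp only [norm_mul, norm_pow, norm_zeta, one_pow, one_mul]
      gcongr <;> exact (norm_indicator_le_norm_self _ _).trans_eq norm_one
    _ = 3 := by norm_num

lemma IsParisian.ae_mem_Zlat {Ω : Type*} {mΩ : MeasurableSpace Ω} {μ : Measure Ω}
    {ℱ : Filtration ℕ mΩ} {Z : ℕ → Ω → ℂ} (hZ : IsParisian μ ℱ Z) (t : ℕ) :
    ∀ᵐ ω ∂μ, Z t ω ∈ Zlat := by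
  induction t with
  | zero => exact hZ.2.1
  | succ t ih =>
    filter_upwards [ih, hZ.2.2 t] with ω hz hw
    simpa using add_mem_Zlat_of_mem_steps hz hw

/-- If `Z` is a Parisian walk, then `Z′ = Σ (φ ΔZ + ψ Δconj Z)` is again a Parisian
walk: an adapted, integrable martingale starting in `ℤ[ζ]` whose increments lie in
`{1, ζ, ζ²}` almost surely. -/
theorem transformedWalk_isParisian
    {Ω : Type*} {mΩ : MeasurableSpace Ω} (μ : Measure Ω) [IsProbabilityMeasure μ]
    (ℱ : Filtration ℕ mΩ) (Z : ℕ → Ω → ℂ) (hZ : IsParisian μ ℱ Z) :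
    IsParisian μ ℱ (transformedWalk Z) := by
  have hφ : StronglyAdapted ℱ fun n ω => phi (Z n ω) := fun n =>
    (measurable_phi.comp (hZ.1.stronglyAdapted n).measurable).stronglyMeasurable
  have hψ : StronglyAdapted ℱ fun n ω => psi (Z n ω) := fun n =>
    (measurable_psi.comp (hZ.1.stronglyAdapted n).measurable).stronglyMeasurable
  have hdecomp : transformedWalk Z =
      (fun n => ∑ k ∈ Finset.range n, (fun ω => phi (Z k ω)) • (Z (k + 1) - Z k)) +
      fun n => ∑ k ∈ Finset.range n,
        (fun ω => psi (Z k ω)) • (conjCLE ∘ Z (k + 1) - conjCLE ∘ Z k) := by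
    funext n ω
    simp [transformedWalk, Finset.sum_add_distrib]
  refine ⟨?_, ae_of_all _ fun ω => ⟨0, 0, by simp [transformedWalk]⟩, fun t => ?_⟩
  · rw [hdecomp]
    exact (hZ.1.sum_smul_sub hφ fun _ _ => norm_phi_le _).add
      ((hZ.1.comp_continuousLinearMap conjCLE.toContinuousLinearMap).sum_smul_sub hψ
        fun _ _ => norm_psi_le _)
  · filter_upwards [hZ.ae_mem_Zlat t, hZ.2.2 t] with ω hz hw
    simpa [transformedWalk, Finset.sum_range_succ, map_sub] using
      phi_mul_add_psi_mul_conj_mem_steps hz hw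

end Parisian
end
end
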